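/- arXiv:1902.02495 — 2 statements merged into one kernel-verified Lean document; each statement's English description precedes it below -/
import Mathlib

section
/- The set of nondecreasing vectors {a ∈ [0,1]^K : a_1 ≤ ⋯ ≤ a_K}, equipped with the normalized Euclidean metric d(a,b) = (K^{-1} Σ_{j=1}^K (a_j − b_j)^2)^{1/2}, admits an ε-covering of cardinality at most (C/ε)^{C'/ε} for universal constants C, C' > 0 and all ε ∈ (0,1); in particular its metric entropy log N(ε) is O(1/ε) uniformly in K, in contrast to the full cube [0,1]^K whose metric entropy in this norm grows linearly in K. -/
/-!
A monotone `a : Fin K → [0,1]` is approximated in two stages: on consecutive blocks of length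
`h ≈ ε²K/4` it is replaced by its value at the start of the block, and these values are rounded
down to the grid `(ε/2)ℕ`. By monotonicity the block errors sum to at most `h - 1` (the total
variation is at most `1`), while rounding costs `ε/2` per coordinate. The resulting staircase is
determined by the block at which it first reaches each of its `⌊2/ε⌋` levels, so there are at most
`(⌈4/ε²⌉ + 1) ^ ⌊2/ε⌋` of them, independently of `K`.

For the full cube, a `1/4`-net contains for every vertex `s ∈ {0,1}^K` a point whose rounding
differs from `s` in at most `K/4` coordinates. Hamming balls of radius `K/4` have at most
`(9/5)^K` points, so the net has at least `(10/9)^K` points.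
-/

open Finset

lemma sum_range_mul_sub_blockStart_le {f : ℕ → ℝ} (hf : Monotone f) (h n : ℕ) :
    ∑ j ∈ range (h * n), (f j - f (h * (j / h))) ≤ ((h : ℝ) - 1) * (f (h * n) - f 0) := by
  rcases h with _ | h
  · simp
  induction n with
  | zero => simp
  | succ n ih =>
    set b := (h + 1) * n
    have hdiv : ∀ r < h + 1, (h + 1) * ((b + r) / (h + 1)) = b := fun r hr => by
      rw [show b + r = r + (h + 1) * n from Nat.add_comm _ _, Nat.add_mul_div_left _ _ h.succ_pos,
        Nat.div_eq_of_lt hr, zero_add]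
    -- the first term of the new block vanishes, the other `h` are at most its increment
    have hblock : ∑ r ∈ range (h + 1), (f (b + r) - f ((h + 1) * ((b + r) / (h + 1))))
        ≤ h * (f (b + (h + 1)) - f b) := by
      rw [sum_range_succ', hdiv 0 h.succ_pos, add_zero, sub_self, add_zero]
      calc ∑ r ∈ range h, (f (b + (r + 1)) - f ((h + 1) * ((b + (r + 1)) / (h + 1))))
          = ∑ r ∈ range h, (f (b + (r + 1)) - f b) :=
            sum_congr rfl fun r hr => by rw [hdiv (r + 1) (by simp at hr; omega)]
        _ ≤ ∑ _r ∈ range h, (f (b + (h + 1)) - f b) :=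
            sum_le_sum fun r hr => sub_le_sub_right (hf (by simp at hr; omega)) _
        _ = h * (f (b + (h + 1)) - f b) := by rw [sum_const, card_range, nsmul_eq_mul]
    rw [mul_add_one, sum_range_add]
    push_cast at ih ⊢
    linarith

lemma sum_range_sub_blockStart_le {f : ℕ → ℝ} (hf : Monotone f) {h n K : ℕ} (hK : K ≤ h * n) :
    ∑ j ∈ range K, (f j - f (h * (j / h))) ≤ ((h : ℝ) - 1) * (f (h * n) - f 0) :=
  (sum_le_sum_of_subset_of_nonneg (range_subset_range.2 hK) fun j _ _ =>
    sub_nonneg.2 (hf (Nat.mul_div_le j h))).trans (sum_range_mul_sub_blockStart_le hf h n)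

noncomputable def levelCount (δ : ℝ) (M : ℕ) (x : ℝ) : ℕ := #{i : Fin M | ((i : ℕ) + 1) * δ ≤ x}

lemma levelCount_eq_floor {δ x : ℝ} {M : ℕ} (hδ : 0 < δ) (hx : 0 ≤ x) (hxM : x < (M + 1) * δ) :
    levelCount δ M x = ⌊x / δ⌋₊ := by
  have hfloor : ⌊x / δ⌋₊ ≤ M := by
    rw [← Nat.lt_succ_iff, Nat.floor_lt (by positivity), div_lt_iff₀ hδ]
    exact_mod_cast hxM
  have hiff : ∀ i : ℕ, ((i : ℝ) + 1) * δ ≤ x ↔ i < ⌊x / δ⌋₊ := fun i => by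
    rw [← Nat.add_one_le_iff, Nat.le_floor_iff (by positivity), le_div_iff₀ hδ]
    push_cast; rfl
  simp only [levelCount, hiff, Fin.card_filter_val_lt, min_eq_right hfloor]

lemma sub_lt_mul_levelCount_le {δ x : ℝ} {M : ℕ} (hδ : 0 < δ) (hx : 0 ≤ x) (hxM : x < (M + 1) * δ) :
    x - δ < δ * levelCount δ M x ∧ δ * levelCount δ M x ≤ x := by
  rw [levelCount_eq_floor hδ hx hxM]
  constructor
  · have := Nat.lt_floor_add_one (x / δ)
    rw [div_lt_iff₀ hδ] at this
    linarith
  · rw [mul_comm, ← le_div_iff₀ hδ]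
    exact Nat.floor_le (by positivity)

lemma card_filter_lt_le_iff {g : ℕ → ℝ} (hg : Monotone g) {y : ℝ} {P q : ℕ} (hq : q < P) :
    #{p ∈ range P | g p < y} ≤ q ↔ y ≤ g q := by
  constructor
  · intro hcard
    by_contra! hlt
    have : range (q + 1) ⊆ {p ∈ range P | g p < y} := fun p hp => by
      simp only [mem_range, mem_filter] at hp ⊢
      exact ⟨by omega, (hg (by omega)).trans_lt hlt⟩
    simpa using (card_le_card this).trans hcard
  · intro hle
    calc #{p ∈ range P | g p < y} ≤ #(range q) := card_le_card fun p hp => by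
          simp only [mem_range, mem_filter] at hp ⊢
          by_contra! hqp
          exact (hle.trans (hg hqp)).not_gt hp.2
      _ = q := card_range q

def staircase (δ : ℝ) (h : ℕ) {M P : ℕ} (c : Fin M → Fin (P + 1)) (j : ℕ) : ℝ :=
  δ * #{i | (c i : ℕ) ≤ j / h}

lemma staircase_monotone (δ : ℝ) (hδ : 0 ≤ δ) (h : ℕ) {M P : ℕ} (c : Fin M → Fin (P + 1)) :
    Monotone (staircase δ h c) := fun j k hjk =>
  mul_le_mul_of_nonneg_left (by
    exact_mod_cast card_le_card fun i hi => by
      simp only [mem_filter] at hi ⊢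
      exact ⟨hi.1, hi.2.trans (Nat.div_le_div_right hjk)⟩) hδ

lemma staircase_mem_Icc (δ : ℝ) (hδ : 0 ≤ δ) (h : ℕ) {M P : ℕ} (c : Fin M → Fin (P + 1)) (j : ℕ) :
    staircase δ h c j ∈ Set.Icc 0 (M * δ) := by
  refine ⟨by unfold staircase; positivity, ?_⟩
  rw [staircase, mul_comm]
  gcongr
  simpa using card_filter_le (univ : Finset (Fin M)) _

lemma exists_staircase_sum_sq_sub_le {f : ℕ → ℝ} (hf : Monotone f) (hf01 : ∀ j, f j ∈ Set.Icc 0 1)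
    {δ : ℝ} (hδ : 0 < δ) {M h P K : ℕ} (hM : 1 < (M + 1) * δ) (hh : 0 < h) (hK : K ≤ h * P) :
    ∃ c : Fin M → Fin (P + 1),
      ∑ j ∈ range K, (f j - staircase δ h c j) ^ 2 ≤ 2 * ((h : ℝ) - 1) + 2 * K * δ ^ 2 := by
  set g : ℕ → ℝ := fun q => f (h * q)
  have hg : Monotone g := fun p q hpq => hf (Nat.mul_le_mul_left h hpq)
  -- `c i` is the first block on which `g` reaches the level `(i + 1) * δ`
  let c : Fin M → Fin (P + 1) := fun i =>
    ⟨#{p ∈ range P | g p < ((i : ℕ) + 1) * δ},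
      Nat.lt_succ_of_le ((card_filter_le _ _).trans_eq (card_range P))⟩
  refine ⟨c, ?_⟩
  have hstep : ∀ j < K, staircase δ h c j = δ * levelCount δ M (g (j / h)) := fun j hj => by
    have hjP : j / h < P := Nat.div_lt_of_lt_mul (by omega)
    simp only [staircase, levelCount, c, card_filter_lt_le_iff hg hjP]
  have hpoint : ∀ j ∈ range K,
      (f j - staircase δ h c j) ^ 2 ≤ 2 * (f j - g (j / h)) + 2 * δ ^ 2 := by
    intro j hj
    rw [hstep j (mem_range.1 hj)]
    obtain ⟨hlow, hup⟩ :=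
      sub_lt_mul_levelCount_le (x := g (j / h)) hδ (hf01 _).1 (hM.trans_le' (hf01 _).2)
    have hblock : 0 ≤ f j - g (j / h) := sub_nonneg.2 (hf (Nat.mul_div_le j h))
    have hblock' : f j - g (j / h) ≤ 1 := by linarith [(hf01 j).2, (hf01 (h * (j / h))).1]
    set L := δ * (levelCount δ M (g (j / h)) : ℝ)
    nlinarith [sq_nonneg (f j - g (j / h) - (g (j / h) - L)),
      mul_nonneg hblock (sub_nonneg.2 hblock'),
      mul_nonneg (sub_nonneg.2 hup) (by linarith : (0 : ℝ) ≤ δ - (g (j / h) - L))]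
  calc ∑ j ∈ range K, (f j - staircase δ h c j) ^ 2
      ≤ ∑ j ∈ range K, (2 * (f j - f (h * (j / h))) + 2 * δ ^ 2) := sum_le_sum hpoint
    _ = 2 * ∑ j ∈ range K, (f j - f (h * (j / h))) + 2 * K * δ ^ 2 := by
      rw [sum_add_distrib, ← mul_sum, sum_const, card_range, nsmul_eq_mul]; ring
    _ ≤ 2 * (((h : ℝ) - 1) * (f (h * P) - f 0)) + 2 * K * δ ^ 2 := by
      gcongr; exact sum_range_sub_blockStart_le hf hK
    _ ≤ 2 * ((h : ℝ) - 1) + 2 * K * δ ^ 2 := by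
      have : (1 : ℝ) ≤ h := by exact_mod_cast hh
      nlinarith [(hf01 (h * P)).2, (hf01 0).1]

lemma extendByOne_monotone {K : ℕ} {a : Fin K → ℝ} (ha : Monotone a) (ha1 : ∀ j, a j ≤ 1) :
    Monotone fun j : ℕ => if hj : j < K then a ⟨j, hj⟩ else 1 := by
  intro j k hjk
  simp only
  split_ifs with hj hk hk
  · exact ha hjk
  · exact ha1 _
  · omega
  · rfl

lemma natCast_succ_pow_floor_le_rpow {ε : ℝ} (hε : ε ∈ Set.Ioo 0 1) :
    (((⌈4 / ε ^ 2⌉₊ + 1) ^ ⌊2 / ε⌋₊ : ℕ) : ℝ) ≤ (3 / ε) ^ (4 / ε) := by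
  obtain ⟨hε0, hε1⟩ := hε
  have hbase : ((⌈4 / ε ^ 2⌉₊ : ℝ) + 1) ≤ (3 / ε) ^ 2 := by
    have := Nat.ceil_lt_add_one (show 0 ≤ 4 / ε ^ 2 by positivity)
    have h1 : 1 ≤ 1 / ε ^ 2 := by rw [le_div_iff₀ (by positivity)]; nlinarith
    rw [div_pow]
    linarith [show (3 : ℝ) ^ 2 / ε ^ 2 = 9 * (1 / ε ^ 2) by ring,
      show 4 / ε ^ 2 = 4 * (1 / ε ^ 2) by ring]
  have hexp : ((2 * ⌊2 / ε⌋₊ : ℕ) : ℝ) ≤ 4 / ε := by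
    push_cast
    linarith [Nat.floor_le (show 0 ≤ 2 / ε by positivity), show 4 / ε = 2 * (2 / ε) by ring]
  calc (((⌈4 / ε ^ 2⌉₊ + 1) ^ ⌊2 / ε⌋₊ : ℕ) : ℝ)
      = ((⌈4 / ε ^ 2⌉₊ : ℝ) + 1) ^ ⌊2 / ε⌋₊ := by push_cast; rfl
    _ ≤ ((3 / ε) ^ 2) ^ ⌊2 / ε⌋₊ := by gcongr
    _ = (3 / ε) ^ ((2 * ⌊2 / ε⌋₊ : ℕ) : ℝ) := by rw [Real.rpow_natCast, pow_mul]
    _ ≤ (3 / ε) ^ (4 / ε) :=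
      Real.rpow_le_rpow_of_exponent_le (by rw [le_div_iff₀ hε0]; linarith) hexp

theorem exists_monotone_cover (K : ℕ) {ε : ℝ} (hε : ε ∈ Set.Ioo 0 1) :
    ∃ T : Finset (Fin K → ℝ),
      (∀ t ∈ T, (∀ j, t j ∈ Set.Icc (0 : ℝ) 1) ∧ Monotone t) ∧
      (T.card : ℝ) ≤ (3 / ε) ^ (4 / ε) ∧
      ∀ a : Fin K → ℝ, (∀ j, a j ∈ Set.Icc (0 : ℝ) 1) → Monotone a →
        ∃ t ∈ T, ∑ j, (a j - t j) ^ 2 ≤ K * ε ^ 2 := by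
  obtain ⟨hε0, hε1⟩ := hε
  set δ := ε / 2
  set M := ⌊2 / ε⌋₊
  set h := ⌊ε ^ 2 * K / 4⌋₊ + 1
  set P := ⌈4 / ε ^ 2⌉₊
  have hMδ : M * δ ≤ 1 := by
    have := Nat.floor_le (show 0 ≤ 2 / ε by positivity)
    calc M * δ ≤ 2 / ε * (ε / 2) := by gcongr
      _ = 1 := by field_simp
  have hM : 1 < (M + 1) * δ := by
    have := Nat.lt_floor_add_one (2 / ε)
    calc (1 : ℝ) = 2 / ε * (ε / 2) := by field_simp
      _ < (M + 1) * δ := by gcongr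
  have hh : ε ^ 2 * K / 4 < h := by push_cast [h]; exact Nat.lt_floor_add_one _
  have hK : K ≤ h * P := by
    have hP : 4 / ε ^ 2 ≤ P := Nat.le_ceil _
    have : (K : ℝ) ≤ h * P := by
      calc (K : ℝ) = ε ^ 2 * K / 4 * (4 / ε ^ 2) := by field_simp
        _ ≤ h * P := by gcongr
    exact_mod_cast this
  refine ⟨univ.image fun c : Fin M → Fin (P + 1) => fun j : Fin K => staircase δ h c j, ?_, ?_, ?_⟩
  · simp only [mem_image, mem_univ, true_and, forall_exists_index, forall_apply_eq_imp_iff]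
    intro c
    refine ⟨fun j => ?_, fun i j hij => staircase_monotone δ (by positivity) h c hij⟩
    obtain ⟨h0, h1⟩ := staircase_mem_Icc δ (by positivity) h c j
    exact ⟨h0, h1.trans hMδ⟩
  · calc (#(univ.image _) : ℝ) ≤ (#(univ : Finset (Fin M → Fin (P + 1))) : ℝ) := by
          exact_mod_cast card_image_le
      _ ≤ (3 / ε) ^ (4 / ε) := by
          simpa using natCast_succ_pow_floor_le_rpow ⟨hε0, hε1⟩
  · intro a ha01 ha
    set f : ℕ → ℝ := fun j => if hj : j < K then a ⟨j, hj⟩ else 1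
    have hf01 : ∀ j, f j ∈ Set.Icc 0 1 := fun j => by
      simp only [f]; split_ifs; exacts [ha01 _, ⟨zero_le_one, le_rfl⟩]
    obtain ⟨c, hc⟩ := exists_staircase_sum_sq_sub_le (extendByOne_monotone ha fun j => (ha01 j).2)
      hf01 (by positivity : 0 < δ) hM (show 0 < h by omega) hK
    refine ⟨_, mem_image_of_mem _ (mem_univ c), ?_⟩
    have hsum : ∑ j, (a j - staircase δ h c j) ^ 2
        = ∑ j ∈ range K, (f j - staircase δ h c j) ^ 2 := by
      rw [← Fin.sum_univ_eq_sum_range]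
      simp [f]
    rw [hsum]
    refine hc.trans ?_
    have : (h : ℝ) - 1 ≤ ε ^ 2 * K / 4 := by
      push_cast [h]; linarith [Nat.floor_le (show 0 ≤ ε ^ 2 * K / 4 by positivity)]
    linarith [show 2 * K * δ ^ 2 = K * ε ^ 2 / 2 by ring]

lemma quarter_le_sq_sub_of_decide_ne {b : Bool} {y : ℝ} (h : decide (1 / 2 ≤ y) ≠ b) :
    1 / 4 ≤ ((if b then 1 else 0) - y) ^ 2 := by
  cases b <;> simp only [ne_eq, decide_eq_true_eq, decide_eq_false_iff_not, not_le, not_lt,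
    Bool.false_eq_true, if_true, if_false] at h ⊢ <;> nlinarith

lemma hammingDist_le_four_mul_sum_sq {ι : Type*} [Fintype ι] (s : ι → Bool) (t : ι → ℝ) :
    (hammingDist s fun j => decide (1 / 2 ≤ t j) : ℝ)
      ≤ 4 * ∑ j, ((if s j then 1 else 0) - t j) ^ 2 := by
  have := card_nsmul_le_sum {j | s j ≠ decide (1 / 2 ≤ t j)}
    (fun j => ((if s j then 1 else 0) - t j) ^ 2) (1 / 4)
    fun j hj => quarter_le_sq_sub_of_decide_ne (mem_filter.1 hj).2.symm
  have hsub := sum_le_sum_of_subset_of_nonneg (subset_univ {j | s j ≠ decide (1 / 2 ≤ t j)})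
    fun j _ _ => sq_nonneg (((if s j then 1 else 0) : ℝ) - t j)
  rw [nsmul_eq_mul] at this
  rw [hammingDist]
  linarith

lemma card_hammingDist_le_le {ι : Type*} [Fintype ι] [DecidableEq ι] (s₀ : ι → Bool) (m : ℕ) :
    #{s | hammingDist s s₀ ≤ m} ≤ ∑ i ∈ range (m + 1), (Fintype.card ι).choose i := by
  let support : (ι → Bool) → Finset ι := fun s => {j | s j ≠ s₀ j}
  have hinj : Set.InjOn support ↑({s | hammingDist s s₀ ≤ m} : Finset (ι → Bool)) :=
    fun s _ s' _ hss' => funext fun j => by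
      have := congrArg (j ∈ ·) hss'
      simp only [support, mem_filter, mem_univ, true_and, eq_iff_iff] at this
      have key : ∀ a b c : Bool, (a ≠ c ↔ b ≠ c) → a = b := by decide
      exact key _ _ _ this
  have hmaps : ∀ s ∈ ({s | hammingDist s s₀ ≤ m} : Finset (ι → Bool)),
      support s ∈ (range (m + 1)).biUnion fun i => powersetCard i univ := fun s hs => by
    simp only [mem_biUnion, mem_range, mem_powersetCard_univ]
    exact ⟨_, Nat.lt_succ_of_le (mem_filter.1 hs).2, rfl⟩
  calc #{s | hammingDist s s₀ ≤ m} ≤ #((range (m + 1)).biUnion fun i => powersetCard i univ) :=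
        card_le_card_of_injOn support hmaps hinj
    _ ≤ ∑ i ∈ range (m + 1), #(powersetCard i (univ : Finset ι)) := card_biUnion_le
    _ = ∑ i ∈ range (m + 1), (Fintype.card ι).choose i := by simp

-- weighting the `i`-th term by `2 ^ (m - i) ≥ 1` and completing the binomial sum
lemma sum_range_choose_le_two_pow_mul {m n : ℕ} (hmn : m ≤ n) :
    ∑ i ∈ range (m + 1), (n.choose i : ℝ) ≤ 2 ^ m * (3 / 2) ^ n := by
  calc ∑ i ∈ range (m + 1), (n.choose i : ℝ)
      ≤ ∑ i ∈ range (m + 1), (2 : ℝ) ^ m * ((1 / 2) ^ i * n.choose i) := sum_le_sum fun i hi => by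
        have : (1 : ℝ) ≤ 2 ^ m * (1 / 2) ^ i := by
          rw [one_div, inv_pow, ← div_eq_mul_inv, one_le_div (by positivity)]
          exact pow_le_pow_right₀ one_le_two (Nat.lt_succ_iff.1 (mem_range.1 hi))
        nlinarith [(Nat.cast_nonneg (n.choose i) : (0 : ℝ) ≤ _)]
    _ ≤ ∑ i ∈ range (n + 1), (2 : ℝ) ^ m * ((1 / 2) ^ i * n.choose i) :=
        sum_le_sum_of_subset_of_nonneg (range_subset_range.2 (by omega)) fun _ _ _ => by positivity
    _ = 2 ^ m * (3 / 2) ^ n := by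
        rw [← mul_sum, show (3 / 2 : ℝ) = 1 / 2 + 1 by norm_num, add_pow]
        simp

theorem ten_ninths_pow_le_card_of_cover_cube {ι : Type*} [Fintype ι] (T : Finset (ι → ℝ))
    (hT : ∀ s : ι → Bool,
      ∃ t ∈ T, ∑ j, ((if s j then 1 else 0 : ℝ) - t j) ^ 2 ≤ (Fintype.card ι : ℝ) / 16) :
    (10 / 9 : ℝ) ^ Fintype.card ι ≤ (#T : ℝ) := by
  classical
  set n := Fintype.card ι
  choose t htT ht using hT
  let round : (ι → ℝ) → ι → Bool := fun u j => decide (1 / 2 ≤ u j)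
  have hround : ∀ s, hammingDist s (round (t s)) ≤ n / 4 := fun s => by
    rw [Nat.le_div_iff_mul_le four_pos]
    have hdist : (hammingDist s (round (t s)) : ℝ)
        ≤ 4 * ∑ j, ((if s j then 1 else 0) - t s j) ^ 2 :=
      hammingDist_le_four_mul_sum_sq s (t s)
    have : (hammingDist s (round (t s)) * 4 : ℝ) ≤ n := by linarith [ht s]
    exact_mod_cast this
  have hfiber : ∀ u ∈ T, #{s ∈ univ | t s = u} ≤ ∑ i ∈ range (n / 4 + 1), n.choose i := fun u _ =>
    (card_le_card fun s hs => by
      simp only [mem_filter, mem_univ, true_and] at hs ⊢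
      exact hs ▸ hround s).trans (card_hammingDist_le_le (round u) (n / 4))
  have hcount := card_le_mul_card_image_of_maps_to (fun s _ => htT s) _ hfiber
  rw [card_univ, Fintype.card_fun, Fintype.card_bool] at hcount
  have hball : ∑ i ∈ range (n / 4 + 1), (n.choose i : ℝ) ≤ (9 / 5) ^ n :=
    calc ∑ i ∈ range (n / 4 + 1), (n.choose i : ℝ) ≤ 2 ^ (n / 4) * (3 / 2) ^ n :=
          sum_range_choose_le_two_pow_mul (Nat.div_le_self n 4)
      _ ≤ ((6 / 5) ^ 4) ^ (n / 4) * (3 / 2) ^ n := by gcongr; norm_num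
      _ ≤ (6 / 5) ^ n * (3 / 2) ^ n := by
          rw [← pow_mul]; gcongr
          · norm_num
          · omega
      _ = (9 / 5) ^ n := by rw [← mul_pow]; norm_num
  have h2 : (2 : ℝ) ^ n ≤ (9 / 5) ^ n * #T := by
    calc (2 : ℝ) ^ n ≤ (∑ i ∈ range (n / 4 + 1), (n.choose i : ℝ)) * #T := by exact_mod_cast hcount
      _ ≤ (9 / 5) ^ n * #T := by gcongr
  have h10 : (10 / 9 : ℝ) ^ n * (9 / 5) ^ n = 2 ^ n := by rw [← mul_pow]; norm_num
  exact le_of_mul_le_mul_right (by rw [h10, mul_comm]; exact h2) (by positivity)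

lemma sqrt_inv_mul_le_iff {K S ε : ℝ} (hK : 0 < K) (hε : 0 ≤ ε) :
    √(K⁻¹ * S) ≤ ε ↔ S ≤ K * ε ^ 2 := by
  rw [Real.sqrt_le_left hε, inv_mul_le_iff₀ hK]

/-- the set of nondecreasing vectors in `[0,1]^K`, in the
normalized Euclidean metric `d(a,b) = (K⁻¹ ∑ (a_j−b_j)²)^{1/2}`, admits for
every `ε ∈ (0,1)` an `ε`-covering of cardinality at most `(C/ε)^(C'/ε)` for
universal constants `C, C' > 0` (so its metric entropy is `O(1/ε)` uniformly
in `K`), whereas the metric entropy of the full cube `[0,1]^K` grows linearly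
in `K` at some fixed scale. -/
theorem metric_entropy_monotone_vectors :
    (∃ C C' : ℝ, 0 < C ∧ 0 < C' ∧ ∀ K : ℕ, 1 ≤ K → ∀ ε : ℝ, ε ∈ Set.Ioo (0:ℝ) 1 →
      ∃ T : Finset (Fin K → ℝ),
        (∀ t ∈ T, (∀ j, t j ∈ Set.Icc (0:ℝ) 1) ∧ Monotone t) ∧
        (T.card : ℝ) ≤ (C / ε) ^ (C' / ε) ∧
        ∀ a : Fin K → ℝ, (∀ j, a j ∈ Set.Icc (0:ℝ) 1) → Monotone a →
          ∃ t ∈ T, Real.sqrt ((K : ℝ)⁻¹ * ∑ j, (a j - t j) ^ 2) ≤ ε) ∧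
    (∃ ε₀ : ℝ, ε₀ ∈ Set.Ioo (0:ℝ) 1 ∧ ∃ c : ℝ, 0 < c ∧ ∀ K : ℕ, 1 ≤ K →
      ∀ T : Finset (Fin K → ℝ),
        (∀ a : Fin K → ℝ, (∀ j, a j ∈ Set.Icc (0:ℝ) 1) →
          ∃ t ∈ T, Real.sqrt ((K : ℝ)⁻¹ * ∑ j, (a j - t j) ^ 2) ≤ ε₀) →
        Real.exp (c * K) ≤ (T.card : ℝ)) := by
  refine ⟨⟨3, 4, by norm_num, by norm_num, fun K hK ε hε => ?_⟩,
    ⟨1 / 4, by norm_num, Real.log (10 / 9), Real.log_pos (by norm_num), fun K hK T hT => ?_⟩⟩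
  · have hKpos : (0 : ℝ) < K := by exact_mod_cast hK
    obtain ⟨T, hTmem, hTcard, hTcov⟩ := exists_monotone_cover K hε
    refine ⟨T, hTmem, hTcard, fun a ha01 ha => ?_⟩
    obtain ⟨t, htT, ht⟩ := hTcov a ha01 ha
    exact ⟨t, htT, (sqrt_inv_mul_le_iff hKpos hε.1.le).2 ht⟩
  · have hKpos : (0 : ℝ) < K := by exact_mod_cast hK
    rw [mul_comm, Real.exp_nat_mul, Real.exp_log (by norm_num)]
    have := ten_ninths_pow_le_card_of_cover_cube T fun s => by
      obtain ⟨t, htT, ht⟩ := hT (fun j => if s j then 1 else 0) fun j => by split_ifs <;> norm_num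
      refine ⟨t, htT, ?_⟩
      rw [sqrt_inv_mul_le_iff hKpos (by norm_num)] at ht
      simpa using ht.trans_eq (by ring)
    simpa using this
end

section
/- For binary Y = {0, 1} with the discrete kernel l(y, y') = 1[y = y'], and any bounded kernel k on Z, the HSIC between a joint distribution D on Z × {0,1} and the product of its marginals satisfies HSIC(D) = 2 p(1−p) · MMD_k(D(z | y=1), D(z | y=0)) · c for an explicit constant c depending only on the kernel l, where p = D(y = 1) ∈ (0,1); in particular HSIC(D) is proportional to p(1−p) times the MMD between the two conditional distributions of z given y. -/
/-!
Write `D = p • (ν₁ ⊗ δ_true) + (1 - p) • (ν₀ ⊗ δ_false)`. Its marginals are `μ = p ν₁ + (1 - p) ν₀`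
and `p δ_true + (1 - p) δ_false`, so the product of the marginals is the same kind of mixture with
both conditionals replaced by `μ`. Expanding the two mean embeddings, their difference is
`p (1 - p) (δ true - δ false)` with `δ b = E_{ν₁} Θ(·, b) - E_{ν₀} Θ(·, b)`. Because
`⟪Θ(z, b), Θ(z', b')⟫ = 1[b = b'] ⟪Φ z, Φ z'⟫`, the vectors `δ true` and `δ false` are orthogonal
and both have norm `MMD`, hence `‖δ true - δ false‖ = √2 MMD`.
-/

open MeasureTheory
open scoped InnerProductSpace

section InnerProduct

variable {α β E F : Type*} [MeasurableSpace α] [MeasurableSpace β]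
  [NormedAddCommGroup E] [InnerProductSpace ℝ E] [CompleteSpace E]
  [NormedAddCommGroup F] [InnerProductSpace ℝ F] [CompleteSpace F]

theorem inner_integral_integral {μ : Measure α} {ν : Measure β} {f : α → E} {g : β → E}
    (hf : Integrable f μ) (hg : Integrable g ν) :
    ⟪∫ x, f x ∂μ, ∫ y, g y ∂ν⟫_ℝ = ∫ x, ∫ y, ⟪f x, g y⟫_ℝ ∂ν ∂μ := by
  rw [real_inner_comm, ← integral_inner hf]
  congr 1 with x
  rw [real_inner_comm, ← integral_inner hg]

theorem inner_integral_integral_eq_of_inner_eq {μ : Measure α} {ν : Measure β}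
    {f : α → E} {f' : β → E} {g : α → F} {g' : β → F} (c : ℝ)
    (h : ∀ x y, ⟪f x, f' y⟫_ℝ = c * ⟪g x, g' y⟫_ℝ)
    (hf : Integrable f μ) (hf' : Integrable f' ν) (hg : Integrable g μ) (hg' : Integrable g' ν) :
    ⟪∫ x, f x ∂μ, ∫ y, f' y ∂ν⟫_ℝ = c * ⟪∫ x, g x ∂μ, ∫ y, g' y ∂ν⟫_ℝ := by
  simp_rw [inner_integral_integral hf hf', inner_integral_integral hg hg', h, integral_const_mul]

theorem inner_integral_sub_integral_eq_of_inner_eq {μ ν : Measure α}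
    {f f' : α → E} {g : α → F} (c : ℝ) (h : ∀ x y, ⟪f x, f' y⟫_ℝ = c * ⟪g x, g y⟫_ℝ)
    (hfμ : Integrable f μ) (hfν : Integrable f ν) (hf'μ : Integrable f' μ)
    (hf'ν : Integrable f' ν) (hgμ : Integrable g μ) (hgν : Integrable g ν) :
    ⟪∫ x, f x ∂μ - ∫ x, f x ∂ν, ∫ x, f' x ∂μ - ∫ x, f' x ∂ν⟫_ℝ =
      c * ‖∫ x, g x ∂μ - ∫ x, g x ∂ν‖ ^ 2 := by
  rw [← real_inner_self_eq_norm_sq]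
  simp only [inner_sub_left, inner_sub_right]
  rw [inner_integral_integral_eq_of_inner_eq c h hfμ hf'μ hgμ hgμ,
    inner_integral_integral_eq_of_inner_eq c h hfμ hf'ν hgμ hgν,
    inner_integral_integral_eq_of_inner_eq c h hfν hf'μ hgν hgμ,
    inner_integral_integral_eq_of_inner_eq c h hfν hf'ν hgν hgν]
  ring

end InnerProduct

section BinaryMixture

variable {α β E : Type*} [MeasurableSpace α] [MeasurableSpace β] [NormedAddCommGroup E]

noncomputable def binaryMixture (p : ℝ) (ν₀ ν₁ : Measure α) : Measure α :=
  ENNReal.ofReal p • ν₁ + ENNReal.ofReal (1 - p) • ν₀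

instance {p : ℝ} {ν₀ ν₁ : Measure α} [SFinite ν₀] [SFinite ν₁] :
    SFinite (binaryMixture p ν₀ ν₁) := by
  unfold binaryMixture; infer_instance

theorem map_binaryMixture {g : α → β} (hg : Measurable g) (p : ℝ) (ν₀ ν₁ : Measure α) :
    (binaryMixture p ν₀ ν₁).map g = binaryMixture p (ν₀.map g) (ν₁.map g) := by
  rw [binaryMixture, Measure.map_add _ _ hg, Measure.map_smul, Measure.map_smul, binaryMixture]

theorem map_fst_binaryMixture_map_prodMk (p : ℝ) (ν₀ ν₁ : Measure α) (b₀ b₁ : β) :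
    (binaryMixture p (ν₀.map (·, b₀)) (ν₁.map (·, b₁))).map Prod.fst = binaryMixture p ν₀ ν₁ := by
  rw [map_binaryMixture measurable_fst, Measure.map_map measurable_fst measurable_prodMk_right,
    Measure.map_map measurable_fst measurable_prodMk_right]
  simp [Function.comp_def]

theorem map_snd_binaryMixture_map_prodMk (p : ℝ) (ν₀ ν₁ : Measure α)
    [IsProbabilityMeasure ν₀] [IsProbabilityMeasure ν₁] (b₀ b₁ : β) :
    (binaryMixture p (ν₀.map (·, b₀)) (ν₁.map (·, b₁))).map Prod.snd =
      binaryMixture p (Measure.dirac b₀) (Measure.dirac b₁) := by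
  rw [map_binaryMixture measurable_snd, Measure.map_map measurable_snd measurable_prodMk_right,
    Measure.map_map measurable_snd measurable_prodMk_right]
  simp [Function.comp_def, Measure.map_const]

theorem prod_binaryMixture_dirac (μ : Measure α) [SFinite μ] (p : ℝ) (b₀ b₁ : β) :
    μ.prod (binaryMixture p (Measure.dirac b₀) (Measure.dirac b₁)) =
      binaryMixture p (μ.map (·, b₀)) (μ.map (·, b₁)) := by
  simp only [binaryMixture, Measure.prod_add, Measure.prod_smul_right, Measure.prod_dirac]

theorem integrable_binaryMixture_iff {p : ℝ} (hp : p ∈ Set.Ioo 0 1) {ν₀ ν₁ : Measure α}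
    {f : α → E} :
    Integrable f (binaryMixture p ν₀ ν₁) ↔ Integrable f ν₀ ∧ Integrable f ν₁ := by
  have hweight : ∀ {a : ℝ}, 0 < a → ∀ {ν : Measure α},
      Integrable f (ENNReal.ofReal a • ν) ↔ Integrable f ν := fun ha =>
    integrable_smul_measure (ENNReal.ofReal_pos.2 ha).ne' ENNReal.ofReal_ne_top
  refine ⟨fun h => ⟨?_, ?_⟩, fun ⟨h₀, h₁⟩ => ?_⟩
  · exact (hweight (sub_pos.2 hp.2)).1 (h.mono_measure (Measure.le_add_left le_rfl))
  · exact (hweight hp.1).1 (h.mono_measure (Measure.le_add_right le_rfl))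
  · exact ((hweight hp.1).2 h₁).add_measure ((hweight (sub_pos.2 hp.2)).2 h₀)

variable [NormedSpace ℝ E]

theorem integral_binaryMixture {p : ℝ} (hp : p ∈ Set.Icc 0 1) {ν₀ ν₁ : Measure α} {f : α → E}
    (h₀ : Integrable f ν₀) (h₁ : Integrable f ν₁) :
    ∫ x, f x ∂(binaryMixture p ν₀ ν₁) = p • ∫ x, f x ∂ν₁ + (1 - p) • ∫ x, f x ∂ν₀ := by
  rw [binaryMixture, integral_add_measure (h₁.smul_measure ENNReal.ofReal_ne_top)
      (h₀.smul_measure ENNReal.ofReal_ne_top), integral_smul_measure, integral_smul_measure,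
    ENNReal.toReal_ofReal hp.1, ENNReal.toReal_ofReal (sub_nonneg.2 hp.2)]

end BinaryMixture

section ProductOfMarginals

variable {α β E : Type*} [MeasurableSpace α] [MeasurableSpace β] [NormedAddCommGroup E]

noncomputable def MeasureTheory.Measure.prodMarginals (D : Measure (α × β)) : Measure (α × β) :=
  (D.map Prod.fst).prod (D.map Prod.snd)

theorem prodMarginals_binaryMixture_map_prodMk (p : ℝ) (ν₀ ν₁ : Measure α)
    [IsProbabilityMeasure ν₀] [IsProbabilityMeasure ν₁] (b₀ b₁ : β) :
    (binaryMixture p (ν₀.map (·, b₀)) (ν₁.map (·, b₁))).prodMarginals =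
      binaryMixture p ((binaryMixture p ν₀ ν₁).map (·, b₀))
        ((binaryMixture p ν₀ ν₁).map (·, b₁)) := by
  rw [Measure.prodMarginals, map_fst_binaryMixture_map_prodMk,
    map_snd_binaryMixture_map_prodMk, prod_binaryMixture_dirac]

variable [MeasurableSingletonClass β]

theorem integrable_map_prodMk_right_iff {μ : Measure α} {b : β} {f : α × β → E} :
    Integrable f (μ.map (·, b)) ↔ Integrable (fun x => f (x, b)) μ :=
  (measurableEmbedding_prod_mk_right b).integrable_map_iff

theorem integrable_prodMk_of_integrable_prodMarginals {p : ℝ} (hp : p ∈ Set.Ioo 0 1)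
    {ν₀ ν₁ : Measure α} [IsProbabilityMeasure ν₀] [IsProbabilityMeasure ν₁] {b₀ b₁ : β}
    {f : α × β → E}
    (hf : Integrable f (binaryMixture p (ν₀.map (·, b₀)) (ν₁.map (·, b₁))).prodMarginals) :
    Integrable (fun x => f (x, b₀)) (binaryMixture p ν₀ ν₁) ∧
      Integrable (fun x => f (x, b₁)) (binaryMixture p ν₀ ν₁) := by
  rwa [prodMarginals_binaryMixture_map_prodMk, integrable_binaryMixture_iff hp,
    integrable_map_prodMk_right_iff, integrable_map_prodMk_right_iff] at hf

variable [NormedSpace ℝ E]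

theorem integral_map_prodMk_right (μ : Measure α) (b : β) (f : α × β → E) :
    ∫ q, f q ∂(μ.map (·, b)) = ∫ x, f (x, b) ∂μ :=
  (measurableEmbedding_prod_mk_right b).integral_map f

theorem integral_binaryMixture_sub_integral_prodMarginals {p : ℝ} (hp : p ∈ Set.Ioo 0 1)
    {ν₀ ν₁ : Measure α} [IsProbabilityMeasure ν₀] [IsProbabilityMeasure ν₁] {b₀ b₁ : β}
    {f : α × β → E}
    (hf : Integrable f (binaryMixture p (ν₀.map (·, b₀)) (ν₁.map (·, b₁))).prodMarginals) :
    ∫ q, f q ∂(binaryMixture p (ν₀.map (·, b₀)) (ν₁.map (·, b₁))) -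
        ∫ q, f q ∂(binaryMixture p (ν₀.map (·, b₀)) (ν₁.map (·, b₁))).prodMarginals =
      (p * (1 - p)) • ((∫ x, f (x, b₁) ∂ν₁ - ∫ x, f (x, b₁) ∂ν₀) -
        (∫ x, f (x, b₀) ∂ν₁ - ∫ x, f (x, b₀) ∂ν₀)) := by
  have hp' := Set.Ioo_subset_Icc_self hp
  obtain ⟨h₀, h₁⟩ := integrable_prodMk_of_integrable_prodMarginals hp hf
  obtain ⟨h₀₀, h₀₁⟩ := (integrable_binaryMixture_iff hp).1 h₀
  obtain ⟨h₁₀, h₁₁⟩ := (integrable_binaryMixture_iff hp).1 h₁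
  rw [prodMarginals_binaryMixture_map_prodMk,
    integral_binaryMixture hp' (integrable_map_prodMk_right_iff.2 h₀₀)
      (integrable_map_prodMk_right_iff.2 h₁₁),
    integral_binaryMixture hp' (integrable_map_prodMk_right_iff.2 h₀)
      (integrable_map_prodMk_right_iff.2 h₁),
    integral_map_prodMk_right, integral_map_prodMk_right, integral_map_prodMk_right,
    integral_map_prodMk_right, integral_binaryMixture hp' h₀₀ h₀₁,
    integral_binaryMixture hp' h₁₀ h₁₁]
  module

end ProductOfMarginals

theorem hsic_eq_mmd_binary_general
    {Z : Type*}
    [MeasurableSpace Z]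
    {K : Type*} [NormedAddCommGroup K] [InnerProductSpace ℝ K] [CompleteSpace K]
    {T : Type*} [NormedAddCommGroup T] [InnerProductSpace ℝ T] [CompleteSpace T]
    (Φ : Z → K) (k : Z → Z → ℝ)
    (hk : ∀ z z', k z z' = inner ℝ (Φ z) (Φ z'))
    (l : Bool → Bool → ℝ) (hl : ∀ y y', l y y' = if y = y' then 1 else 0)
    (Θ : Z × Bool → T)
    (hΘ : ∀ p q : Z × Bool, (inner ℝ (Θ p) (Θ q) : ℝ) = k p.1 q.1 * l p.2 q.2)
    (ν₀ ν₁ : Measure Z) [IsProbabilityMeasure ν₀] [IsProbabilityMeasure ν₁]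
    (p : ℝ) (hp : p ∈ Set.Ioo (0:ℝ) 1)
    (D : Measure (Z × Bool))
    (hD : D = ENNReal.ofReal p • ν₁.map (fun z => (z, true)) +
      ENNReal.ofReal (1 - p) • ν₀.map (fun z => (z, false)))
    (hintΘ' : Integrable Θ ((D.map Prod.fst).prod (D.map Prod.snd)))
    (hintΦ₀ : Integrable Φ ν₀) (hintΦ₁ : Integrable Φ ν₁)
    (HSIC MMD : ℝ)
    (hHSIC : HSIC =
      ‖(∫ q, Θ q ∂D) - ∫ q, Θ q ∂((D.map Prod.fst).prod (D.map Prod.snd))‖)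
    (hMMD : MMD = ‖(∫ z, Φ z ∂ν₁) - ∫ z, Φ z ∂ν₀‖) :
    HSIC = 2 * p * (1 - p) * MMD * (Real.sqrt 2 / 2) := by
  subst hD
  have hmarg : Integrable Θ
      (binaryMixture p (ν₀.map (·, false)) (ν₁.map (·, true))).prodMarginals := hintΘ'
  have hslice : ∀ b, Integrable (fun z => Θ (z, b)) ν₀ ∧ Integrable (fun z => Θ (z, b)) ν₁ := by
    obtain ⟨hfalse, htrue⟩ := integrable_prodMk_of_integrable_prodMarginals hp hmarg
    rintro (_ | _)
    exacts [(integrable_binaryMixture_iff hp).1 hfalse, (integrable_binaryMixture_iff hp).1 htrue]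
  set δ : Bool → T := fun b => ∫ z, Θ (z, b) ∂ν₁ - ∫ z, Θ (z, b) ∂ν₀
  have hδ : ∀ b b', ⟪δ b, δ b'⟫_ℝ = l b b' * MMD ^ 2 := fun b b' => by
    rw [hMMD]
    refine inner_integral_sub_integral_eq_of_inner_eq _ (fun z z' => ?_) (hslice b).2 (hslice b).1
      (hslice b').2 (hslice b').1 hintΦ₁ hintΦ₀
    rw [hΘ, hk, mul_comm]
  have hnorm : ‖δ true - δ false‖ = Real.sqrt 2 * MMD := by
    have hsq : ‖δ true - δ false‖ ^ 2 = 2 * MMD ^ 2 := by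
      rw [norm_sub_sq_real, ← real_inner_self_eq_norm_sq, ← real_inner_self_eq_norm_sq, hδ, hδ, hδ]
      simp only [hl, ↓reduceIte, one_mul, Bool.true_eq_false, zero_mul, mul_zero, sub_zero]
      ring
    rw [← Real.sqrt_sq (norm_nonneg _), hsq, Real.sqrt_mul zero_le_two,
      Real.sqrt_sq (hMMD ▸ norm_nonneg _)]
  calc HSIC = ‖(p * (1 - p)) • (δ true - δ false)‖ := by
        rw [hHSIC, ← integral_binaryMixture_sub_integral_prodMarginals hp hmarg]
        rfl
    _ = p * (1 - p) * (Real.sqrt 2 * MMD) := by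
        rw [norm_smul, Real.norm_of_nonneg (mul_nonneg hp.1.le (sub_nonneg.2 hp.2.le)), hnorm]
    _ = 2 * p * (1 - p) * MMD * (Real.sqrt 2 / 2) := by ring

/-- for binary actions `Y = {0,1}` (modelled by `Bool`) with the
discrete kernel `l(y,y') = 1[y = y']`, the HSIC between a joint distribution
`D` on `Z × Bool` and the product of its marginals equals
`2 p (1−p) · MMD_k(D(z|y=1), D(z|y=0)) · c` with the explicit constant
`c = √2 / 2` depending only on `l`, where `p = D(y = 1)`. -/
theorem hsic_eq_mmd_binary
    {Z : Type*} [MetricSpace Z] [TopologicalSpace.SeparableSpace Z]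
    [MeasurableSpace Z] [BorelSpace Z]
    {K : Type*} [NormedAddCommGroup K] [InnerProductSpace ℝ K] [CompleteSpace K]
    {T : Type*} [NormedAddCommGroup T] [InnerProductSpace ℝ T] [CompleteSpace T]
    (Φ : Z → K) (k : Z → Z → ℝ)
    (hk : ∀ z z', k z z' = inner ℝ (Φ z) (Φ z'))
    (hkbdd : ∃ C : ℝ, ∀ z z', |k z z'| ≤ C)
    (l : Bool → Bool → ℝ) (hl : ∀ y y', l y y' = if y = y' then 1 else 0)
    (Θ : Z × Bool → T)
    (hΘ : ∀ p q : Z × Bool, (inner ℝ (Θ p) (Θ q) : ℝ) = k p.1 q.1 * l p.2 q.2)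
    (ν₀ ν₁ : Measure Z) [IsProbabilityMeasure ν₀] [IsProbabilityMeasure ν₁]
    (p : ℝ) (hp : p ∈ Set.Ioo (0:ℝ) 1)
    (D : Measure (Z × Bool))
    (hD : D = ENNReal.ofReal p • ν₁.map (fun z => (z, true)) +
      ENNReal.ofReal (1 - p) • ν₀.map (fun z => (z, false)))
    (hintΘ : Integrable Θ D)
    (hintΘ' : Integrable Θ ((D.map Prod.fst).prod (D.map Prod.snd)))
    (hintΦ₀ : Integrable Φ ν₀) (hintΦ₁ : Integrable Φ ν₁)
    (HSIC MMD : ℝ)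
    (hHSIC : HSIC =
      ‖(∫ q, Θ q ∂D) - ∫ q, Θ q ∂((D.map Prod.fst).prod (D.map Prod.snd))‖)
    (hMMD : MMD = ‖(∫ z, Φ z ∂ν₁) - ∫ z, Φ z ∂ν₀‖) :
    HSIC = 2 * p * (1 - p) * MMD * (Real.sqrt 2 / 2) :=
  hsic_eq_mmd_binary_general Φ k hk l hl Θ hΘ ν₀ ν₁ p hp D hD hintΘ' hintΦ₀ hintΦ₁ HSIC MMD hHSIC
    hMMD
end
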